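/- Let d ≥ 1 and let P : ℝ → ℂ[X] be a family of polynomials such that for every index i the coefficient map s ↦ coeff(P(s), i) is continuous, and P(s) has degree exactly d (nonzero leading coefficient) for every s ∈ [0,1]. Let λ, μ : [0,1] → ℂ be continuous functions with P(s)(λ(s)) = 0 and P(s)(μ(s)) = 0 for all s ∈ [0,1], with λ(0) = μ(0), and suppose λ(s) is a simple root of P(s) (root multiplicity 1) for every s ∈ [0,1]. Then λ(s) = μ(s) for all s ∈ [0,1]. -/
import Mathlib

open Polynomial Finset

/-- Branch identity continuity along an EP-free homotopy path: for a family of degree-`d`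
polynomials with coefficients continuous in `s ∈ [0,1]`, two continuous root branches that
agree at `s = 0` coincide on all of `[0,1]`, provided one of them is a simple root
(multiplicity 1) throughout. -/
theorem stmt_11 (d : ℕ) (hd : 1 ≤ d) (P : ℝ → Polynomial ℂ)
    (hcoeff : ∀ i : ℕ, Continuous fun s => (P s).coeff i)
    (hdeg : ∀ s ∈ Set.Icc (0 : ℝ) 1, (P s).degree = d)
    (lam mu : ℝ → ℂ)
    (hlam : ContinuousOn lam (Set.Icc 0 1)) (hmu : ContinuousOn mu (Set.Icc 0 1))
    (hlroot : ∀ s ∈ Set.Icc (0 : ℝ) 1, (P s).IsRoot (lam s))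
    (hmroot : ∀ s ∈ Set.Icc (0 : ℝ) 1, (P s).IsRoot (mu s))
    (h0 : lam 0 = mu 0)
    (hsimple : ∀ s ∈ Set.Icc (0 : ℝ) 1, (P s).rootMultiplicity (lam s) = 1) :
    ∀ s ∈ Set.Icc (0 : ℝ) 1, lam s = mu s := by
  set T := Set.Icc (0 : ℝ) 1 with hT
  have hnatdeg : ∀ s ∈ T, (P s).natDegree = d := fun s hs =>
    natDegree_eq_of_degree_eq_some (hdeg s hs)
  have hPne : ∀ s ∈ T, P s ≠ 0 := by
    intro s hs h
    have h2 := hdeg s hs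
    rw [h, degree_zero] at h2
    simp at h2
  -- The explicit continuous function F s = eval (mu s) (P s /ₘ (X - C (lam s)))
  set F : ℝ → ℂ := fun s => ∑ n ∈ Finset.range d,
    (∑ i ∈ Finset.Icc (n + 1) d, lam s ^ (i - (n + 1)) * (P s).coeff i) * mu s ^ n with hFdef
  have hFeval : ∀ s ∈ T, F s = Polynomial.eval (mu s) ((P s) /ₘ (X - C (lam s))) := by
    intro s hs
    have hQdeg : ((P s) /ₘ (X - C (lam s))).natDegree < d := by
      rw [natDegree_divByMonic _ (monic_X_sub_C _), natDegree_X_sub_C, hnatdeg s hs]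
      omega
    rw [eval_eq_sum_range' hQdeg]
    refine Finset.sum_congr rfl fun n _ => ?_
    rw [coeff_divByMonic_X_sub_C, hnatdeg s hs]
  -- Key equivalence: on T, lam s = mu s ↔ F s ≠ 0
  have hkey : ∀ s ∈ T, (lam s = mu s ↔ F s ≠ 0) := by
    intro s hs
    set Q := (P s) /ₘ (X - C (lam s)) with hQ
    have hfac : (X - C (lam s)) * Q = P s :=
      mul_divByMonic_eq_iff_isRoot.2 (hlroot s hs)
    have hQne : Q ≠ 0 := by
      intro h
      apply hPne s hs
      rw [← hfac, h, mul_zero]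
    have hmult : Q.rootMultiplicity (lam s) = 0 := by
      have : (Q * (X - C (lam s)) ^ 1).rootMultiplicity (lam s)
          = Q.rootMultiplicity (lam s) + 1 := rootMultiplicity_mul_X_sub_C_pow hQne
      rw [pow_one, mul_comm, hfac, hsimple s hs] at this
      omega
    have hnotroot : ¬ Q.IsRoot (lam s) := by
      intro h
      exact hQne (rootMultiplicity_eq_zero_iff.1 hmult h)
    constructor
    · intro h hF
      apply hnotroot
      rw [hFeval s hs, ← hQ] at hF
      rw [IsRoot, h]
      exact hF
    · intro hF
      by_contra hne
      apply hF
      have hPmu : (mu s - lam s) * Polynomial.eval (mu s) Q = 0 := by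
        have := hmroot s hs
        rw [IsRoot, ← hfac] at this
        simpa using this
      rcases mul_eq_zero.1 hPmu with h | h
      · exact absurd (by linear_combination -h : lam s = mu s) hne
      · rw [hFeval s hs, ← hQ, h]
  -- Continuity of F on T
  have hFcont : ContinuousOn F T := by
    apply continuousOn_finset_sum
    intro n _
    apply ContinuousOn.mul
    · apply continuousOn_finset_sum
      intro i _
      exact (hlam.pow _).mul (hcoeff i).continuousOn
    · exact hmu.pow _
  -- Connectedness argument on the subtype
  haveI : PreconnectedSpace T := Subtype.preconnectedSpace isPreconnected_Icc
  set E : Set T := {t : T | lam (t : ℝ) = mu (t : ℝ)} with hE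
  have hEclosed : IsClosed E := by
    have : E = (fun t : T => lam (t : ℝ) - mu (t : ℝ)) ⁻¹' {0} := by
      ext t; simp [hE, sub_eq_zero]
    rw [this]
    exact IsClosed.preimage ((hlam.restrict).sub (hmu.restrict)) isClosed_singleton
  have hEopen : IsOpen E := by
    have : E = (fun t : T => F (t : ℝ)) ⁻¹' {0}ᶜ := by
      ext t
      simp only [hE, Set.mem_setOf_eq, Set.mem_preimage, Set.mem_compl_iff,
        Set.mem_singleton_iff]
      exact hkey t t.2
    rw [this]
    exact IsOpen.preimage hFcont.restrict isOpen_compl_singleton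
  have hne : E.Nonempty := ⟨⟨0, by constructor <;> norm_num⟩, h0⟩
  have := (IsClopen.eq_univ ⟨hEclosed, hEopen⟩ hne : E = Set.univ)
  intro s hs
  have : (⟨s, hs⟩ : T) ∈ E := this ▸ Set.mem_univ _
  exact this
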